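/- arXiv:2501.17515 — 5 statements merged into one kernel-verified Lean document; each statement's English description precedes it below -/
import Mathlib

section
/- Sklar's theorem for densities: if f is a probability density on ℝ^N with marginal densities f_1,...,f_N on ℝ, each f_i positive on ℝ, and F_i denotes the CDF of f_i, then the function c(u_1,...,u_N) = f(F_1⁻¹(u_1),...,F_N⁻¹(u_N)) / (f_1(F_1⁻¹(u_1))···f_N(F_N⁻¹(u_N))) is a probability density on [0,1]^N, and f(x_1,...,x_N) = c(F_1(x_1),...,F_N(x_N)) · f_1(x_1)···f_N(x_N) for all x. -/
open MeasureTheory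

lemma det_diag_pi (N : ℕ) (d : Fin N → ℝ) :
    (ContinuousLinearMap.pi fun i => d i • ContinuousLinearMap.proj (R := ℝ)
      (φ := fun _ : Fin N => ℝ) i).det = ∏ i, d i := by
  rw [ContinuousLinearMap.det, ← LinearMap.det_toMatrix (Pi.basisFun ℝ (Fin N))]
  have : (LinearMap.toMatrix (Pi.basisFun ℝ (Fin N)) (Pi.basisFun ℝ (Fin N))
      (ContinuousLinearMap.pi fun i => d i • ContinuousLinearMap.proj (R := ℝ)
      (φ := fun _ : Fin N => ℝ) i).toLinearMap) = Matrix.diagonal d := by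
    ext i j
    simp [LinearMap.toMatrix_apply, Matrix.diagonal, Pi.single_apply, eq_comm]
  rw [this, Matrix.det_diagonal]

/-- **Sklar's theorem for densities.** If `f` is a probability density on `ℝ^N`
with marginal densities `f_1,...,f_N`, each continuous and strictly positive, and `F_i` are the
CDFs with inverses `Finv i`, then
`c(u) = f(F₁⁻¹ u₁, ..., F_N⁻¹ u_N) / ∏ᵢ fᵢ(Fᵢ⁻¹ uᵢ)` is a probability density on `(0,1)^N`
and `f(x) = c(F₁ x₁, ..., F_N x_N) · ∏ᵢ fᵢ(xᵢ)`. -/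
theorem sklar_theorem_densities
    (N : ℕ) (hN : 1 ≤ N)
    (f : (Fin N → ℝ) → ℝ) (fm : Fin N → ℝ → ℝ) (F Finv : Fin N → ℝ → ℝ)
    (hf_meas : Measurable f) (hf_nonneg : ∀ x, 0 ≤ f x)
    (hf_int : ∫ x, f x = 1)
    (hmarg : ∀ i : Fin N,
      (volume.withDensity fun x => ENNReal.ofReal (f x)).map (fun x => x i)
        = volume.withDensity fun t => ENNReal.ofReal (fm i t))
    (hfm_cont : ∀ i, Continuous (fm i)) (hfm_pos : ∀ i t, 0 < fm i t)
    (hF : ∀ i x, F i x = ∫ t in Set.Iic x, fm i t)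
    (hFinv_right : ∀ i, ∀ u ∈ Set.Ioo (0:ℝ) 1, F i (Finv i u) = u)
    (hFinv_left : ∀ i x, Finv i (F i x) = x) :
    (∀ u ∈ Set.univ.pi (fun _ : Fin N => Set.Ioo (0:ℝ) 1),
        0 ≤ f (fun i => Finv i (u i)) / ∏ i, fm i (Finv i (u i))) ∧
    (∫ u in Set.univ.pi (fun _ : Fin N => Set.Ioo (0:ℝ) 1),
        f (fun i => Finv i (u i)) / ∏ i, fm i (Finv i (u i)) = 1) ∧
    (∀ x : Fin N → ℝ,
        f x = (f (fun i => Finv i (F i (x i))) / ∏ i, fm i (Finv i (F i (x i))))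
                * ∏ i, fm i (x i)) := by
  have hprod_pos : ∀ x : Fin N → ℝ, 0 < ∏ i, fm i (x i) :=
    fun x => Finset.prod_pos fun i _ => hfm_pos i (x i)
  -- f is integrable
  have hf_integrable : Integrable f := by
    by_contra h
    rw [integral_undef h] at hf_int
    norm_num at hf_int
  -- total mass of lintegral of f is 1
  have hlint_f : ∫⁻ x, ENNReal.ofReal (f x) = 1 := by
    rw [← ofReal_integral_eq_lintegral_ofReal hf_integrable
      (Filter.Eventually.of_forall hf_nonneg), hf_int, ENNReal.ofReal_one]
  -- lintegral of each marginal is 1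
  have hlint_fm : ∀ i, ∫⁻ t, ENNReal.ofReal (fm i t) = 1 := by
    intro i
    have h := congrArg (fun μ : Measure ℝ => μ Set.univ) (hmarg i)
    simp only [Measure.map_apply (measurable_pi_apply i) MeasurableSet.univ,
      Set.preimage_univ] at h
    rw [withDensity_apply _ MeasurableSet.univ, withDensity_apply _ MeasurableSet.univ,
      setLIntegral_univ, setLIntegral_univ, hlint_f] at h
    exact h.symm
  -- each fm i is integrable with integral 1
  have hfm_integrable : ∀ i, Integrable (fm i) := by
    intro i
    refine ⟨(hfm_cont i).aestronglyMeasurable, ?_⟩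
    rw [hasFiniteIntegral_iff_ofReal (Filter.Eventually.of_forall fun t => (hfm_pos i t).le),
      hlint_fm i]
    exact ENNReal.one_lt_top
  have hfm_int_one : ∀ i, ∫ t, fm i t = 1 := by
    intro i
    have := ofReal_integral_eq_lintegral_ofReal (hfm_integrable i)
      (Filter.Eventually.of_forall fun t => (hfm_pos i t).le)
    rw [hlint_fm i, ← ENNReal.ofReal_one] at this
    exact ENNReal.ofReal_eq_ofReal_iff (integral_nonneg fun t => (hfm_pos i t).le)
      (by norm_num) |>.mp this
  -- F i x ∈ (0, 1)
  have hF_mem : ∀ i x, F i x ∈ Set.Ioo (0:ℝ) 1 := by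
    intro i x
    have hIic : IntegrableOn (fm i) (Set.Iic x) := (hfm_integrable i).integrableOn
    have hIoi : IntegrableOn (fm i) (Set.Ioi x) := (hfm_integrable i).integrableOn
    constructor
    · rw [hF]
      rw [setIntegral_pos_iff_support_of_nonneg_ae
        (Filter.Eventually.of_forall fun t => (hfm_pos i t).le) hIic]
      have : Function.support (fm i) = Set.univ := by
        ext t; simp [(hfm_pos i t).ne']
      rw [this, Set.univ_inter]
      simp [Real.volume_Iic]
    · have hsum : F i x + ∫ t in Set.Ioi x, fm i t = 1 := by
        rw [hF, intervalIntegral.integral_Iic_add_Ioi hIic hIoi, hfm_int_one]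
      have hpos : 0 < ∫ t in Set.Ioi x, fm i t := by
        rw [setIntegral_pos_iff_support_of_nonneg_ae
          (Filter.Eventually.of_forall fun t => (hfm_pos i t).le) hIoi]
        have : Function.support (fm i) = Set.univ := by
          ext t; simp [(hfm_pos i t).ne']
        rw [this, Set.univ_inter]
        simp [Real.volume_Ioi]
      linarith
  -- derivative of F i
  have hF_deriv : ∀ i t, HasDerivAt (F i) (fm i t) t := by
    intro i t
    have heq : ∀ b, F i b = (∫ s in (0:ℝ)..b, fm i s) + F i 0 := by
      intro b
      have := intervalIntegral.integral_Iic_sub_Iic (μ := volume) (a := (0:ℝ)) (b := b)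
        ((hfm_integrable i).integrableOn) ((hfm_integrable i).integrableOn)
      rw [hF i b, hF i 0]
      linarith [this]
    have h : HasDerivAt (fun b => (∫ s in (0:ℝ)..b, fm i s) + F i 0) (fm i t) t :=
      (((hfm_cont i).integral_hasStrictDerivAt 0 t).hasDerivAt).add_const _
    exact h.congr_of_eventuallyEq (Filter.Eventually.of_forall heq)
  -- the map Φ
  set Φ : (Fin N → ℝ) → (Fin N → ℝ) := fun x i => F i (x i) with hΦ
  have hΦ_inj : Function.Injective Φ := by
    intro x y hxy
    funext i
    have h : F i (x i) = F i (y i) := congrFun hxy i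
    rw [← hFinv_left i (x i), ← hFinv_left i (y i), h]
  have hΦ_range : Set.range Φ = Set.univ.pi (fun _ : Fin N => Set.Ioo (0:ℝ) 1) := by
    ext u
    constructor
    · rintro ⟨x, rfl⟩ i _
      exact hF_mem i (x i)
    · intro hu
      refine ⟨fun i => Finv i (u i), funext fun i => ?_⟩
      exact hFinv_right i (u i) (hu i (Set.mem_univ i))
  -- fderiv of Φ
  set L : (Fin N → ℝ) → ((Fin N → ℝ) →L[ℝ] (Fin N → ℝ)) := fun x =>
    ContinuousLinearMap.pi (fun i => fm i (x i) • ContinuousLinearMap.proj i) with hL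
  have hΦ_deriv : ∀ x, HasFDerivAt Φ (L x) x := by
    intro x
    apply hasFDerivAt_pi''
    intro i
    rw [hL]
    have hp : HasFDerivAt (fun y : Fin N → ℝ => y i)
        (ContinuousLinearMap.proj (R := ℝ) (φ := fun _ : Fin N => ℝ) i) x :=
      hasFDerivAt_apply i x
    have h1 := (hF_deriv i (x i)).comp_hasFDerivAt x hp
    have h2 : (ContinuousLinearMap.proj (R := ℝ) (φ := fun _ : Fin N => ℝ) i).comp
        (ContinuousLinearMap.pi (fun j => fm j (x j) • ContinuousLinearMap.proj j
          : ∀ _ : Fin N, (Fin N → ℝ) →L[ℝ] ℝ))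
        = fm i (x i) • ContinuousLinearMap.proj i :=
      ContinuousLinearMap.proj_pi (fun j => fm j (x j) • ContinuousLinearMap.proj j) i
    rw [h2]
    exact h1
  have hdet : ∀ x, (L x).det = ∏ i, fm i (x i) := fun x => det_diag_pi N fun i => fm i (x i)
  refine ⟨?_, ?_, ?_⟩
  · intro u _
    exact div_nonneg (hf_nonneg _) (Finset.prod_nonneg fun i _ => (hfm_pos _ _).le)
  · rw [← hΦ_range, ← Set.image_univ]
    rw [integral_image_eq_integral_abs_det_fderiv_smul volume MeasurableSet.univ
      (fun x _ => (hΦ_deriv x).hasFDerivWithinAt) hΦ_inj.injOn]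
    rw [Measure.restrict_univ]
    have hintegrand : ∀ x : Fin N → ℝ,
        |(L x).det| • (f (fun i => Finv i (Φ x i)) / ∏ i, fm i (Finv i (Φ x i))) = f x := by
      intro x
      simp only [hΦ, hFinv_left, hdet, smul_eq_mul]
      rw [abs_of_pos (hprod_pos x), mul_div_cancel₀ _ (hprod_pos x).ne']
    simp only [hintegrand]
    exact hf_int
  · intro x
    simp only [hFinv_left]
    rw [div_mul_cancel₀ _ (hprod_pos x).ne']
end

section
/- Let ρ be a continuous strictly positive probability-normalized density of total mass N on ℝ (i.e. ∫ρ = N), and let F(x) = (1/N)∫_{-∞}^x ρ. Define the Seidl maps s_i : ℝ → ℝ by s_i(x) = F⁻¹(F(x) + (i-1)/N mod 1) for i = 2,...,N. Then each s_i transports the measure ρ/N to itself, i.e. the pushforward of ρ/N under s_i equals ρ/N. -/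
open MeasureTheory

/-- Let `ρ` be a continuous strictly positive density with `∫ ρ = N` and
`F x = (1/N) ∫_{-∞}^x ρ`, with inverse `Finv : (0,1) → ℝ`. The Seidl maps
`sᵢ(x) = F⁻¹(F x + (i-1)/N mod 1)`, `i = 2,...,N`, transport the probability measure with
density `ρ/N` to itself. -/
theorem seidl_maps_transport
    (N : ℕ) (hN : 1 ≤ N)
    (ρ : ℝ → ℝ) (hρ_cont : Continuous ρ) (hρ_pos : ∀ x, 0 < ρ x)
    (hρ_int : ∫ x, ρ x = N)
    (F Finv : ℝ → ℝ)
    (hF : ∀ x, F x = (1 / (N:ℝ)) * ∫ t in Set.Iic x, ρ t)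
    (hF_mem : ∀ x, F x ∈ Set.Ioo (0:ℝ) 1)
    (hFinv_right : ∀ u ∈ Set.Ioo (0:ℝ) 1, F (Finv u) = u)
    (hFinv_left : ∀ x, Finv (F x) = x)
    (i : ℕ) (hi2 : 2 ≤ i) (hiN : i ≤ N) :
    (volume.withDensity fun x => ENNReal.ofReal (ρ x / N)).map
        (fun x => Finv (Int.fract (F x + ((i:ℝ) - 1) / N)))
      = volume.withDensity fun x => ENNReal.ofReal (ρ x / N) := by
  classical
  have hN0 : (0:ℝ) < N := Nat.cast_pos.mpr (by omega)
  set c : ℝ := ((i:ℝ) - 1) / N with hc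
  have hi2' : (2:ℝ) ≤ i := by exact_mod_cast hi2
  have hiN' : (i:ℝ) ≤ N := by exact_mod_cast hiN
  have hc0 : 0 < c := div_pos (by linarith) hN0
  have hc1 : c < 1 := by rw [hc, div_lt_one hN0]; linarith
  -- integrability of ρ
  have hρ_integrable : Integrable ρ := by
    by_contra h
    rw [integral_undef h] at hρ_int
    exact hN0.ne' hρ_int.symm
  have hρN_int : Integrable (fun x => ρ x / N) := hρ_integrable.div_const N
  -- F is strictly monotone
  have hmono : StrictMono F := by
    intro x y hxy
    have hpos : 0 < ∫ t in x..y, ρ t :=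
      intervalIntegral.intervalIntegral_pos_of_pos (hρ_integrable.intervalIntegrable) hρ_pos hxy
    have hsub := intervalIntegral.integral_Iic_sub_Iic (hρ_integrable.integrableOn (s := Set.Iic x))
      (hρ_integrable.integrableOn (s := Set.Iic y))
    have h1N : 0 < 1/(N:ℝ) := by positivity
    rw [hF x, hF y]
    nlinarith [hsub, hpos, h1N]
  have hFmeas : Measurable F := hmono.monotone.measurable
  set μ := volume.withDensity fun x => ENNReal.ofReal (ρ x / N) with hμ
  have hμ_Iic : ∀ x, μ (Set.Iic x) = ENNReal.ofReal (F x) := by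
    intro x
    rw [hμ, withDensity_apply _ measurableSet_Iic,
      ← ofReal_integral_eq_lintegral_ofReal (hρN_int.integrableOn)
        (Filter.Eventually.of_forall fun t => div_nonneg (hρ_pos t).le hN0.le)]
    congr 1
    rw [hF x, integral_div]
    ring
  have hμ_univ : μ Set.univ = 1 := by
    rw [hμ, withDensity_apply _ MeasurableSet.univ, Measure.restrict_univ,
      ← ofReal_integral_eq_lintegral_ofReal hρN_int
        (Filter.Eventually.of_forall fun t => div_nonneg (hρ_pos t).le hN0.le),
      integral_div, hρ_int, div_self hN0.ne', ENNReal.ofReal_one]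
  haveI : IsProbabilityMeasure μ := ⟨hμ_univ⟩
  set ν := volume.restrict (Set.Ioo (0:ℝ) 1) with hν
  haveI : IsFiniteMeasure ν := ⟨by
    rw [hν, Measure.restrict_apply_univ, Real.volume_Ioo]
    exact ENNReal.ofReal_lt_top⟩
  -- the simple set identity for t < 1
  have hIic_inter : ∀ t : ℝ, t < 1 → Set.Iic t ∩ Set.Ioo (0:ℝ) 1 = Set.Ioc 0 t := by
    intro t ht
    ext u
    simp only [Set.mem_inter_iff, Set.mem_Iic, Set.mem_Ioo, Set.mem_Ioc]
    constructor
    · rintro ⟨h1, h2, h3⟩; exact ⟨h2, h1⟩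
    · rintro ⟨h1, h2⟩; exact ⟨h2, h1, lt_of_le_of_lt h2 ht⟩
  -- Step A : μ.map F = ν
  have hmapF : μ.map F = ν := by
    refine MeasureTheory.Measure.ext_of_Iic _ _ fun t => ?_
    rw [Measure.map_apply hFmeas measurableSet_Iic, hν,
      Measure.restrict_apply measurableSet_Iic]
    rcases le_or_gt 1 t with ht1 | ht1
    · have h1 : F ⁻¹' Set.Iic t = Set.univ := by
        ext x
        simp only [Set.mem_preimage, Set.mem_Iic, Set.mem_univ, iff_true]
        exact le_trans (hF_mem x).2.le ht1
      have h2 : Set.Iic t ∩ Set.Ioo (0:ℝ) 1 = Set.Ioo 0 1 := by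
        apply Set.inter_eq_self_of_subset_right
        intro u hu
        exact le_trans hu.2.le ht1
      rw [h1, h2, hμ_univ, Real.volume_Ioo]
      norm_num
    rcases le_or_gt t 0 with ht0 | ht0
    · have h1 : F ⁻¹' Set.Iic t = ∅ := by
        ext x
        simp only [Set.mem_preimage, Set.mem_Iic, Set.mem_empty_iff_false, iff_false, not_le]
        exact lt_of_le_of_lt ht0 (hF_mem x).1
      rw [h1, hIic_inter t ht1, Set.Ioc_eq_empty (by linarith)]
      simp
    · have h1 : F ⁻¹' Set.Iic t = Set.Iic (Finv t) := by
        ext x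
        simp only [Set.mem_preimage, Set.mem_Iic]
        nth_rewrite 1 [← hFinv_right t ⟨ht0, ht1⟩]
        exact hmono.le_iff_le
      rw [h1, hμ_Iic, hFinv_right t ⟨ht0, ht1⟩, hIic_inter t ht1, Real.volume_Ioc]
      norm_num
  -- fract computations
  have hfract_lo : ∀ u : ℝ, 0 ≤ u + c → u + c < 1 → Int.fract (u + c) = u + c := by
    intro u h0 h1; exact Int.fract_eq_self.mpr ⟨h0, h1⟩
  have hfract_hi : ∀ u : ℝ, 1 ≤ u + c → u + c < 2 → Int.fract (u + c) = u + c - 1 := by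
    intro u h1 h2
    have : Int.fract (u + c) = Int.fract (u + c - (1:ℤ)) := (Int.fract_sub_intCast _ _).symm
    rw [this]
    push_cast
    exact Int.fract_eq_self.mpr ⟨by linarith, by linarith⟩
  have hg : Measurable fun u : ℝ => Int.fract (u + c) :=
    (measurable_id.add_const c).fract
  -- Step B : ν.map (fract (· + c)) = ν
  have hmapg : ν.map (fun u => Int.fract (u + c)) = ν := by
    refine MeasureTheory.Measure.ext_of_Iic _ _ fun t => ?_
    rw [Measure.map_apply hg measurableSet_Iic, hν, Measure.restrict_apply measurableSet_Iic,
      Measure.restrict_apply (hg measurableSet_Iic)]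
    rcases le_or_gt 1 t with ht1 | ht1
    · have h1 : (fun u => Int.fract (u + c)) ⁻¹' Set.Iic t ∩ Set.Ioo (0:ℝ) 1
          = Set.Ioo (0:ℝ) 1 := by
        apply Set.inter_eq_self_of_subset_right
        intro u _
        simp only [Set.mem_preimage, Set.mem_Iic]
        exact le_trans (Int.fract_lt_one _).le ht1
      have h2 : Set.Iic t ∩ Set.Ioo (0:ℝ) 1 = Set.Ioo 0 1 := by
        apply Set.inter_eq_self_of_subset_right
        intro u hu
        exact le_trans hu.2.le ht1
      rw [h1, h2]
    rw [hIic_inter t ht1, Real.volume_Ioc]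
    rcases lt_or_ge t 0 with ht0 | ht0
    · have h1 : (fun u => Int.fract (u + c)) ⁻¹' Set.Iic t ∩ Set.Ioo (0:ℝ) 1 = ∅ := by
        ext u
        simp only [Set.mem_inter_iff, Set.mem_preimage, Set.mem_Iic, Set.mem_Ioo,
          Set.mem_empty_iff_false, iff_false, not_and]
        intro h
        exact absurd (lt_of_le_of_lt h ht0) (not_lt.mpr (Int.fract_nonneg _))
      rw [h1]
      simp only [measure_empty, sub_zero]
      exact (ENNReal.ofReal_eq_zero.mpr ht0.le).symm
    rcases lt_or_ge t c with htc | htc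
    · -- 0 ≤ t < c : the set is Icc (1-c) (t+1-c)
      have h1 : (fun u => Int.fract (u + c)) ⁻¹' Set.Iic t ∩ Set.Ioo (0:ℝ) 1
          = Set.Icc (1 - c) (t + 1 - c) := by
        ext u
        simp only [Set.mem_inter_iff, Set.mem_preimage, Set.mem_Iic, Set.mem_Ioo, Set.mem_Icc]
        constructor
        · rintro ⟨hle, hu0, hu1⟩
          rcases lt_or_ge (u + c) 1 with hlt | hge
          · rw [hfract_lo u (by linarith) hlt] at hle
            exact absurd hle (by push_neg; linarith)
          · rw [hfract_hi u hge (by linarith)] at hle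
            constructor <;> linarith
        · rintro ⟨h1, h2⟩
          have hu0 : 0 < u := by linarith
          have hu1 : u < 1 := by linarith
          rw [hfract_hi u (by linarith) (by linarith)]
          exact ⟨by linarith, hu0, hu1⟩
      rw [h1, Real.volume_Icc]
      congr 1
      ring
    · -- c ≤ t < 1 : the set is Ioc 0 (t-c) ∪ Ico (1-c) 1
      have h1 : (fun u => Int.fract (u + c)) ⁻¹' Set.Iic t ∩ Set.Ioo (0:ℝ) 1
          = Set.Ioc 0 (t - c) ∪ Set.Ico (1 - c) 1 := by
        ext u
        simp only [Set.mem_inter_iff, Set.mem_preimage, Set.mem_Iic, Set.mem_Ioo,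
          Set.mem_union, Set.mem_Ioc, Set.mem_Ico]
        constructor
        · rintro ⟨hle, hu0, hu1⟩
          rcases lt_or_ge (u + c) 1 with hlt | hge
          · rw [hfract_lo u (by linarith) hlt] at hle
            exact Or.inl ⟨hu0, by linarith⟩
          · exact Or.inr ⟨by linarith, hu1⟩
        · rintro (⟨h1, h2⟩ | ⟨h1, h2⟩)
          · rw [hfract_lo u (by linarith) (by linarith)]
            exact ⟨by linarith, h1, by linarith⟩
          · rw [hfract_hi u (by linarith) (by linarith)]
            exact ⟨by linarith, by linarith, h2⟩
      have hdisj : Disjoint (Set.Ioc (0:ℝ) (t - c)) (Set.Ico (1 - c) 1) := by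
        apply Set.disjoint_left.mpr
        rintro u ⟨hu1, hu2⟩ ⟨hu3, hu4⟩
        linarith
      rw [h1, measure_union hdisj measurableSet_Ico, Real.volume_Ioc, Real.volume_Ico,
        ← ENNReal.ofReal_add (by linarith) (by linarith)]
      congr 1
      ring
  -- Continuity of Finv on (0,1)
  haveI : (Set.Ioo (0:ℝ) 1).OrdConnected := Set.ordConnected_Ioo
  have hFinv_cont : ContinuousOn Finv (Set.Ioo 0 1) := by
    rw [continuousOn_iff_continuous_restrict]
    let e : ℝ ≃o Set.Ioo (0:ℝ) 1 :=
      { toFun := fun x => ⟨F x, hF_mem x⟩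
        invFun := fun u => Finv u
        left_inv := hFinv_left
        right_inv := fun u => Subtype.ext (hFinv_right u u.2)
        map_rel_iff' := @fun a b => hmono.le_iff_le }
    exact e.symm.continuous
  have hFinv_ae : AEMeasurable Finv ν := by
    rw [hν]
    exact hFinv_cont.aemeasurable measurableSet_Ioo
  -- assemble
  have key1 : μ.map (fun x => Int.fract (F x + c)) = ν := by
    have : (fun x => Int.fract (F x + c)) = (fun u => Int.fract (u + c)) ∘ F := rfl
    rw [this, ← Measure.map_map hg hFmeas, hmapF, hmapg]
  have hh : Measurable fun x => Int.fract (F x + c) := hg.comp hFmeas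
  have hcomp : (fun x => Finv (Int.fract (F x + c)))
      = Finv ∘ (fun x => Int.fract (F x + c)) := rfl
  rw [hcomp, ← AEMeasurable.map_map_of_aemeasurable (by rw [key1]; exact hFinv_ae)
      hh.aemeasurable, key1, ← hmapF,
    AEMeasurable.map_map_of_aemeasurable (by rw [hmapF]; exact hFinv_ae) hFmeas.aemeasurable]
  have : (Finv ∘ F) = id := funext hFinv_left
  rw [this, Measure.map_id]
end

section
/- Copula of dissociated 1D systems, off-diagonal block: let ρ = ρ_A + ρ_B on ℝ with ρ_A supported in (-∞,l], ρ_B in (l,∞), ∫ρ_A = N_A, ∫ρ_B = N_B, N = N_A + N_B, and let the pair density satisfy ρ₂(r,r') = (1/2)ρ_A(r)ρ_B(r') for r ≤ l < r'. Then the copula c(x,y) = (2N/(N-1)) ρ₂(F⁻¹(x),F⁻¹(y))/(ρ(F⁻¹(x))ρ(F⁻¹(y))), with F the CDF of ρ/N, equals the constant N/(N-1) for all x < N_A/N ≤ y. -/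
open MeasureTheory

/-- **copula of dissociated 1D systems, off-diagonal block.**
Let `ρ = ρ_A + ρ_B` with `ρ_A` supported in `(-∞, l]` of mass `N_A` and `ρ_B` supported in
`(l, ∞)` of mass `N_B`, `N = N_A + N_B`, and suppose the pair density satisfies
`ρ₂(r,r') = (1/2) ρ_A(r) ρ_B(r')` for `r ≤ l < r'`. Then the copula
`c(x,y) = (2N/(N-1)) ρ₂(F⁻¹ x, F⁻¹ y)/(ρ(F⁻¹ x) ρ(F⁻¹ y))` equals the constant `N/(N-1)`
for all `x < N_A/N ≤ y`. -/
theorem copula_dissociated_offdiagonal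
    (l : ℝ) (NA NB : ℕ) (hNA : 1 ≤ NA) (hNB : 1 ≤ NB)
    (ρA ρB : ℝ → ℝ)
    (hcA : Continuous ρA) (hcB : Continuous ρB)
    (hnnA : ∀ x, 0 ≤ ρA x) (hnnB : ∀ x, 0 ≤ ρB x)
    (hsuppA : Function.support ρA ⊆ Set.Iic l)
    (hsuppB : Function.support ρB ⊆ Set.Ioi l)
    (hintA : (Function.support ρA).OrdConnected)
    (hintB : (Function.support ρB).OrdConnected)
    (hmassA : ∫ x, ρA x = NA) (hmassB : ∫ x, ρB x = NB)
    (ρ₂ : ℝ → ℝ → ℝ)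
    (hρ₂ : ∀ r r', r ≤ l → l < r' → ρ₂ r r' = (1/2) * ρA r * ρB r')
    (F Finv : ℝ → ℝ)
    (hF : ∀ x, F x = (1 / ((NA:ℝ) + NB)) * ∫ t in Set.Iic x, (ρA t + ρB t))
    (hFinv_right : ∀ y ∈ Set.Ioo (0:ℝ) 1, F (Finv y) = y)
    (hFinv_mem : ∀ y ∈ Set.Ioo (0:ℝ) 1,
      Finv y ∈ Function.support fun t => ρA t + ρB t) :
    ∀ x y : ℝ, 0 < x → x < (NA:ℝ) / ((NA:ℝ) + NB) →
      (NA:ℝ) / ((NA:ℝ) + NB) ≤ y → y < 1 →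
      (2 * ((NA:ℝ) + NB) / (((NA:ℝ) + NB) - 1)) * ρ₂ (Finv x) (Finv y) /
          ((ρA (Finv x) + ρB (Finv x)) * (ρA (Finv y) + ρB (Finv y)))
        = ((NA:ℝ) + NB) / (((NA:ℝ) + NB) - 1) := by
  intro x y hx0 hxN hyN hy1
  have hNA1 : (1:ℝ) ≤ NA := by exact_mod_cast hNA
  have hNB1 : (1:ℝ) ≤ NB := by exact_mod_cast hNB
  have hN : (0:ℝ) < (NA:ℝ) + NB := by linarith
  -- integrability
  have hIA : Integrable ρA := by
    by_contra h
    rw [integral_undef h] at hmassA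
    exact absurd hmassA.symm (by positivity)
  have hIB : Integrable ρB := by
    by_contra h
    rw [integral_undef h] at hmassB
    exact absurd hmassB.symm (by positivity)
  have hIρ : Integrable (fun t => ρA t + ρB t) := hIA.add hIB
  -- densities vanish at the splitting point
  have hρBl : ρB l = 0 := by
    by_contra h
    exact lt_irrefl l (hsuppB h)
  have hρAl : ρA l = 0 := by
    by_contra h
    have hpos : 0 < ρA l := lt_of_le_of_ne (hnnA l) (Ne.symm h)
    have hU : {t : ℝ | 0 < ρA t} ∈ nhds l :=
      (isOpen_lt continuous_const hcA).mem_nhds hpos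
    have hU' : {t : ℝ | 0 < ρA t} ∈ nhdsWithin l (Set.Ioi l) :=
      mem_nhdsWithin_of_mem_nhds hU
    obtain ⟨t, ht, htl⟩ := Filter.nonempty_of_mem (Filter.inter_mem hU' self_mem_nhdsWithin)
    exact absurd (hsuppA (ne_of_gt ht)) (mt Set.mem_Iic.mp (not_le.mpr (Set.mem_Ioi.mp htl)))
  -- value of F at l
  have hFl : F l = (NA:ℝ) / ((NA:ℝ) + NB) := by
    rw [hF l]
    have h1 : ∫ t in Set.Iic l, ρB t = 0 :=
      setIntegral_eq_zero_of_forall_eq_zero fun t ht => by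
        by_contra h
        exact (not_lt.mpr (Set.mem_Iic.mp ht)) (Set.mem_Ioi.mp (hsuppB h))
    have h2 : ∫ t in Set.Iic l, ρA t = ∫ t, ρA t :=
      setIntegral_eq_integral_of_forall_compl_eq_zero fun t ht => by
        by_contra h
        exact ht (hsuppA h)
    rw [integral_add hIA.integrableOn hIB.integrableOn, h1, h2, hmassA, add_zero]
    field_simp
  -- monotonicity of F
  have hmono : ∀ a b : ℝ, a ≤ b → F a ≤ F b := by
    intro a b hab
    have hsub : F b - F a
        = (1 / ((NA:ℝ) + NB)) * ∫ t in a..b, (ρA t + ρB t) := by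
      rw [hF a, hF b, ← mul_sub,
        intervalIntegral.integral_Iic_sub_Iic hIρ.integrableOn hIρ.integrableOn]
    have hnn : 0 ≤ ∫ t in a..b, (ρA t + ρB t) :=
      intervalIntegral.integral_nonneg hab fun t _ => add_nonneg (hnnA t) (hnnB t)
    nlinarith [mul_nonneg (le_of_lt (show (0:ℝ) < 1 / ((NA:ℝ) + NB) by positivity)) hnn]
  have hx1 : x < 1 := lt_trans hxN (by rw [div_lt_one hN]; linarith)
  have hy0 : 0 < y := lt_of_lt_of_le (by positivity) hyN
  have hxm : x ∈ Set.Ioo (0:ℝ) 1 := ⟨hx0, hx1⟩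
  have hym : y ∈ Set.Ioo (0:ℝ) 1 := ⟨hy0, hy1⟩
  have hFx := hFinv_right x hxm
  have hFy := hFinv_right y hym
  -- Finv x < l
  have haxl : Finv x < l := by
    by_contra h
    have := hmono l (Finv x) (not_lt.mp h)
    rw [hFx, hFl] at this
    linarith
  have hBx : ρB (Finv x) = 0 := by
    by_contra h
    exact lt_asymm haxl (hsuppB h)
  have hAx : 0 < ρA (Finv x) := by
    have hne : ρA (Finv x) ≠ 0 := by
      intro h
      exact hFinv_mem x hxm (by simp [h, hBx])
    exact lt_of_le_of_ne (hnnA _) (Ne.symm hne)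
  -- l < Finv y
  have hbl : l < Finv y := by
    by_contra h
    have hb : Finv y ≤ l := not_lt.mp h
    have hBy : ρB (Finv y) = 0 := by
      by_contra h'
      exact (not_lt.mpr hb) (hsuppB h')
    have hAy : 0 < ρA (Finv y) := by
      have hne : ρA (Finv y) ≠ 0 := by
        intro h'
        exact hFinv_mem y hym (by simp [h', hBy])
      exact lt_of_le_of_ne (hnnA _) (Ne.symm hne)
    have hbne : Finv y ≠ l := fun h' => by rw [h', hρAl] at hAy; exact lt_irrefl 0 hAy
    have hblt : Finv y < l := lt_of_le_of_ne hb hbne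
    -- the integral of ρ over (Finv y, l] is positive
    have hU : {t : ℝ | 0 < ρA t} ∈ nhds (Finv y) :=
      (isOpen_lt continuous_const hcA).mem_nhds hAy
    obtain ⟨ε, hε, hball⟩ := Metric.mem_nhds_iff.mp hU
    set c : ℝ := min (Finv y + ε) l with hc
    have hbc : Finv y < c := lt_min (by linarith) hblt
    have hsub : Set.Ioo (Finv y) c ⊆
        Function.support (fun t => ρA t + ρB t) ∩ Set.Ioc (Finv y) l := by
      intro t ht
      have ht1 : 0 < ρA t := hball (by
        rw [Metric.mem_ball, Real.dist_eq, abs_lt]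
        constructor <;> [linarith [ht.1]; linarith [lt_of_lt_of_le ht.2 (min_le_left _ _)]])
      refine ⟨fun h0 => ?_, ht.1, le_of_lt (lt_of_lt_of_le ht.2 (min_le_right _ _))⟩
      have := hnnB t
      simp only at h0
      nlinarith
    have hpos : 0 < ∫ t in Finv y..l, (ρA t + ρB t) := by
      rw [intervalIntegral.integral_pos_iff_support_of_nonneg_ae
        (Filter.Eventually.of_forall fun t => add_nonneg (hnnA t) (hnnB t))
        hIρ.intervalIntegrable]
      refine ⟨hblt, lt_of_lt_of_le ?_ (measure_mono hsub)⟩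
      rw [Real.volume_Ioo]
      simp [hbc, sub_pos]
    have hsubF : F l - F (Finv y)
        = (1 / ((NA:ℝ) + NB)) * ∫ t in Finv y..l, (ρA t + ρB t) := by
      rw [hF (Finv y), hF l, ← mul_sub,
        intervalIntegral.integral_Iic_sub_Iic hIρ.integrableOn hIρ.integrableOn]
    have : 0 < F l - F (Finv y) := by
      rw [hsubF]; positivity
    rw [hFy, hFl] at this
    linarith
  have hAy : ρA (Finv y) = 0 := by
    by_contra h
    exact absurd (hsuppA h) (not_le.mpr hbl)
  have hBy : 0 < ρB (Finv y) := by
    have hne : ρB (Finv y) ≠ 0 := by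
      intro h
      exact hFinv_mem y hym (by simp [h, hAy])
    exact lt_of_le_of_ne (hnnB _) (Ne.symm hne)
  rw [hρ₂ (Finv x) (Finv y) (le_of_lt haxl) hbl, hBx, hAy, add_zero, zero_add]
  have hN1 : ((NA:ℝ) + NB) - 1 ≠ 0 := by linarith
  field_simp
end

section
/- The SCE N-point density γ(x_1,...,x_N) obtained by symmetrizing (ρ(x_1)/N)·δ_{s_2(x_1)}(x_2)···δ_{s_N(x_1)}(x_N), where s_i are the Seidl maps for ρ, has single-particle marginal ρ/N in each variable. -/
open MeasureTheory Set

/-- The SCE `N`-point density `γ`, obtained by symmetrizing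
`(ρ(x₁)/N) δ_{s₂(x₁)}(x₂) ⋯ δ_{s_N(x₁)}(x_N)` where `sᵢ(x) = F⁻¹(F x + (i-1)/N mod 1)` are
the Seidl maps of `ρ` (i.e. `γ = S_N ((id, s₂, ..., s_N)_# (ρ/N))`), has single-particle
marginal `ρ/N` in each variable. -/
theorem sce_density_marginals
    (N : ℕ) (hN : 1 ≤ N)
    (ρ : ℝ → ℝ) (hρ_cont : Continuous ρ) (hρ_pos : ∀ x, 0 < ρ x)
    (hρ_int : ∫ x, ρ x = N)
    (F Finv : ℝ → ℝ)
    (hF : ∀ x, F x = (1 / (N:ℝ)) * ∫ t in Set.Iic x, ρ t)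
    (hF_mem : ∀ x, F x ∈ Set.Ioo (0:ℝ) 1)
    (hFinv_right : ∀ u ∈ Set.Ioo (0:ℝ) 1, F (Finv u) = u)
    (hFinv_left : ∀ x, Finv (F x) = x) :
    ∀ j : Fin N,
      Measure.map (fun y => y j)
        ((((N.factorial : ℕ) : ENNReal))⁻¹ •
          ∑ σ : Equiv.Perm (Fin N),
            Measure.map (fun x (i : Fin N) => Finv (Int.fract (F x + ((σ i : ℕ) : ℝ) / N)))
              (volume.withDensity fun x => ENNReal.ofReal (ρ x / N)))
      = volume.withDensity fun x => ENNReal.ofReal (ρ x / N) := by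
  intro j
  set μ : Measure ℝ := volume.withDensity fun x => ENNReal.ofReal (ρ x / N) with hμdef
  have hN0 : (0:ℝ) < N := by exact_mod_cast Nat.lt_of_lt_of_le Nat.zero_lt_one hN
  -- integrability of ρ
  have hρ_integrable : Integrable ρ := by
    by_contra h
    rw [integral_undef h] at hρ_int
    have : N = 0 := by exact_mod_cast hρ_int.symm
    omega
  -- F strictly monotone
  have hFmono : StrictMono F := by
    intro x y hxy
    rw [hF x, hF y]
    have hpos : 0 < ∫ t in x..y, ρ t :=
      intervalIntegral.intervalIntegral_pos_of_pos hρ_integrable.intervalIntegrable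
        hρ_pos hxy
    have hsub : (∫ t in Iic y, ρ t) - ∫ t in Iic x, ρ t = ∫ t in x..y, ρ t :=
      intervalIntegral.integral_Iic_sub_Iic hρ_integrable.integrableOn hρ_integrable.integrableOn
    have h1N : (0:ℝ) < 1 / N := by positivity
    nlinarith [hpos, hsub]
  have hFmeas : Measurable F := hFmono.monotone.measurable
  -- μ of Iic
  have hμIic : ∀ y, μ (Iic y) = ENNReal.ofReal (F y) := by
    intro y
    rw [hμdef, withDensity_apply _ measurableSet_Iic]
    have hnn : 0 ≤ᵐ[volume.restrict (Iic y)] fun x => ρ x / N :=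
      Filter.Eventually.of_forall fun x => div_nonneg (hρ_pos x).le hN0.le
    have hint : Integrable (fun x => ρ x / N) (volume.restrict (Iic y)) :=
      (hρ_integrable.div_const N).integrableOn
    rw [← ofReal_integral_eq_lintegral_ofReal hint hnn]
    congr 1
    rw [hF y, integral_div]
    ring
  have hμuniv : μ Set.univ = 1 := by
    rw [hμdef, withDensity_apply _ MeasurableSet.univ, Measure.restrict_univ]
    have hnn : 0 ≤ᵐ[(volume : Measure ℝ)] fun x => ρ x / N :=
      Filter.Eventually.of_forall fun x => div_nonneg (hρ_pos x).le hN0.le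
    rw [← ofReal_integral_eq_lintegral_ofReal (hρ_integrable.div_const N) hnn]
    rw [integral_div, hρ_int, div_self (ne_of_gt hN0), ENNReal.ofReal_one]
  haveI : IsFiniteMeasure μ := ⟨by rw [hμuniv]; exact ENNReal.one_lt_top⟩
  set ν : Measure ℝ := volume.restrict (Ioo (0:ℝ) 1) with hνdef
  haveI : IsFiniteMeasure ν := by
    constructor
    rw [hνdef, Measure.restrict_apply_univ, Real.volume_Ioo]
    exact ENNReal.ofReal_lt_top
  have hνIic : ∀ u : ℝ, ν (Iic u) = ENNReal.ofReal (min u 1) := by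
    intro u
    rw [hνdef, Measure.restrict_apply measurableSet_Iic]
    rcases le_or_gt u 0 with hu | hu
    · have : Iic u ∩ Ioo (0:ℝ) 1 = ∅ := by
        ext v; simp only [mem_inter_iff, mem_Iic, mem_Ioo, mem_empty_iff_false, iff_false]
        rintro ⟨h1, h2, h3⟩; linarith
      rw [this, measure_empty]
      rw [ENNReal.ofReal_eq_zero.mpr (le_trans (min_le_left _ _) hu)]
    · rcases lt_or_ge u 1 with hu1 | hu1
      · have : Iic u ∩ Ioo (0:ℝ) 1 = Ioc 0 u := by
          ext v; simp only [mem_inter_iff, mem_Iic, mem_Ioo, mem_Ioc]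
          constructor
          · rintro ⟨h1, h2, h3⟩; exact ⟨h2, h1⟩
          · rintro ⟨h1, h2⟩; exact ⟨h2, h1, by linarith⟩
        rw [this, Real.volume_Ioc, min_eq_left hu1.le, sub_zero]
      · have : Iic u ∩ Ioo (0:ℝ) 1 = Ioo 0 1 := by
          apply inter_eq_self_of_subset_right
          intro v hv; exact le_trans hv.2.le hu1
        rw [this, Real.volume_Ioo, min_eq_right hu1, sub_zero]
  -- map F μ = ν
  have hmapF : Measure.map F μ = ν := by
    refine Measure.ext_of_Iic _ _ (fun u => ?_)
    rw [Measure.map_apply hFmeas measurableSet_Iic, hνIic]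
    rcases le_or_gt u 0 with hu | hu
    · have : F ⁻¹' Iic u = ∅ := by
        ext x; simp only [mem_preimage, mem_Iic, mem_empty_iff_false, iff_false, not_le]
        exact lt_of_le_of_lt hu (hF_mem x).1
      rw [this, measure_empty, ENNReal.ofReal_eq_zero.mpr (le_trans (min_le_left _ _) hu)]
    · rcases lt_or_ge u 1 with hu1 | hu1
      · have : F ⁻¹' Iic u = Iic (Finv u) := by
          ext x
          simp only [mem_preimage, mem_Iic]
          nth_rewrite 1 [← hFinv_right u ⟨hu, hu1⟩]
          exact hFmono.le_iff_le
        rw [this, hμIic, hFinv_right u ⟨hu, hu1⟩, min_eq_left hu1.le]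
      · have : F ⁻¹' Iic u = Set.univ := by
          ext x; simp only [mem_preimage, mem_Iic, mem_univ, iff_true]
          exact le_trans (hF_mem x).2.le hu1
        rw [this, hμuniv, min_eq_right hu1, ENNReal.ofReal_one]
  -- Finv monotone and continuous on Ioo 0 1
  have hFinvMono : StrictMonoOn Finv (Ioo (0:ℝ) 1) := by
    intro u hu v hv huv
    have : F (Finv u) < F (Finv v) := by
      rw [hFinv_right u hu, hFinv_right v hv]; exact huv
    exact hFmono.lt_iff_lt.mp this
  have hFinvImage : Finv '' (Ioo (0:ℝ) 1) = Set.univ := by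
    apply eq_univ_of_forall
    intro x
    exact ⟨F x, hF_mem x, hFinv_left x⟩
  have hFinvCont : ContinuousOn Finv (Ioo (0:ℝ) 1) := by
    intro u hu
    have : ContinuousAt Finv u := by
      apply hFinvMono.continuousAt_of_image_mem_nhds
        (isOpen_Ioo.mem_nhds hu)
      rw [hFinvImage]; exact Filter.univ_mem
    exact this.continuousWithinAt
  have hFinvAEM : AEMeasurable Finv ν := hFinvCont.aemeasurable measurableSet_Ioo
  -- map Finv ν = μ
  have hmapFinv : Measure.map Finv ν = μ := by
    refine Measure.ext_of_Iic _ _ (fun y => ?_)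
    rw [Measure.map_apply_of_aemeasurable hFinvAEM measurableSet_Iic, hμIic,
      hνdef, Measure.restrict_apply' measurableSet_Ioo]
    have hset : Finv ⁻¹' Iic y ∩ Ioo (0:ℝ) 1 = Ioc 0 (F y) := by
      ext u
      simp only [mem_inter_iff, mem_preimage, mem_Iic, mem_Ioo, mem_Ioc]
      constructor
      · rintro ⟨h1, h2, h3⟩
        refine ⟨h2, ?_⟩
        have : F (Finv u) ≤ F y := hFmono.monotone h1
        rwa [hFinv_right u ⟨h2, h3⟩] at this
      · rintro ⟨h1, h2⟩
        have hu1 : u < 1 := lt_of_le_of_lt h2 (hF_mem y).2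
        refine ⟨?_, h1, hu1⟩
        have := hFinvMono.monotoneOn ⟨h1, hu1⟩ (hF_mem y) h2
        rwa [hFinv_left y] at this
    rw [hset, Real.volume_Ioc, sub_zero]
  -- map of fract translation preserves ν
  have hτmeas : ∀ c : ℝ, Measurable (fun u : ℝ => Int.fract (u + c)) :=
    fun c => (measurable_id.add_const c).fract
  have hfract : ∀ c : ℝ, 0 ≤ c → c < 1 →
      Measure.map (fun u => Int.fract (u + c)) ν = ν := by
    intro c hc0 hc1
    rcases eq_or_lt_of_le hc0 with hc | hc
    · -- c = 0
      have : (fun u : ℝ => Int.fract (u + c)) =ᵐ[ν] id := by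
        rw [hνdef]
        filter_upwards [ae_restrict_mem measurableSet_Ioo] with u hu
        rw [← hc, add_zero, Int.fract_eq_self.mpr ⟨hu.1.le, hu.2⟩, id]
      rw [Measure.map_congr this, Measure.map_id]
    · refine Measure.ext_of_Iic _ _ (fun u => ?_)
      rw [Measure.map_apply (hτmeas c) measurableSet_Iic, hνIic,
        hνdef, Measure.restrict_apply ((hτmeas c) measurableSet_Iic)]
      have hfr1 : ∀ v : ℝ, 0 < v → v < 1 - c → Int.fract (v + c) = v + c := by
        intro v h1 h2; exact Int.fract_eq_self.mpr ⟨by linarith, by linarith⟩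
      have hfr2 : ∀ v : ℝ, 1 - c ≤ v → v < 1 → Int.fract (v + c) = v + c - 1 := by
        intro v h1 h2
        have : Int.fract (v + c) = Int.fract (v + c - (1:ℤ)) := (Int.fract_sub_intCast _ _).symm
        rw [this]
        push_cast
        exact Int.fract_eq_self.mpr ⟨by linarith, by linarith⟩
      rcases lt_or_ge u 0 with hu | hu
      · have : (fun v : ℝ => Int.fract (v + c)) ⁻¹' Iic u ∩ Ioo 0 1 = ∅ := by
          ext v
          simp only [mem_inter_iff, mem_preimage, mem_Iic, mem_Ioo,
            mem_empty_iff_false, iff_false]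
          rintro ⟨h1, _⟩
          exact absurd (le_trans (Int.fract_nonneg _) h1) (not_le.mpr hu)
        rw [this, measure_empty, ENNReal.ofReal_eq_zero.mpr (le_trans (min_le_left _ _) hu.le)]
      · rcases lt_or_ge u 1 with hu1 | hu1
        · rcases lt_or_ge u c with huc | huc
          · -- 0 ≤ u < c : set is Icc (1-c) (u+1-c)
            have hset : (fun v : ℝ => Int.fract (v + c)) ⁻¹' Iic u ∩ Ioo 0 1
                = Icc (1 - c) (u + 1 - c) := by
              ext v
              simp only [mem_inter_iff, mem_preimage, mem_Iic, mem_Ioo, mem_Icc]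
              constructor
              · rintro ⟨h1, h2, h3⟩
                rcases lt_or_ge v (1 - c) with hv | hv
                · rw [hfr1 v h2 hv] at h1
                  exact absurd h1 (by push_neg; linarith)
                · rw [hfr2 v hv h3] at h1
                  exact ⟨hv, by linarith⟩
              · rintro ⟨h1, h2⟩
                have hv1 : v < 1 := by linarith
                have hv0 : (0:ℝ) < v := by linarith
                rw [hfr2 v h1 hv1]
                exact ⟨by linarith, hv0, hv1⟩
            rw [hset, Real.volume_Icc, min_eq_left hu1.le]
            congr 1; ring
          · -- c ≤ u < 1 : set is Ioc 0 (u-c) ∪ Ico (1-c) 1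
            have hset : (fun v : ℝ => Int.fract (v + c)) ⁻¹' Iic u ∩ Ioo 0 1
                = Ioc 0 (u - c) ∪ Ico (1 - c) 1 := by
              ext v
              simp only [mem_inter_iff, mem_preimage, mem_Iic, mem_Ioo, mem_union,
                mem_Ioc, mem_Ico]
              constructor
              · rintro ⟨h1, h2, h3⟩
                rcases lt_or_ge v (1 - c) with hv | hv
                · rw [hfr1 v h2 hv] at h1
                  exact Or.inl ⟨h2, by linarith⟩
                · exact Or.inr ⟨hv, h3⟩
              · rintro (⟨h1, h2⟩ | ⟨h1, h2⟩)
                · have hv1 : v < 1 - c := by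
                    rcases lt_or_ge v (1-c) with h | h
                    · exact h
                    · linarith
                  rw [hfr1 v h1 hv1]
                  exact ⟨by linarith, h1, by linarith⟩
                · rw [hfr2 v h1 h2]
                  refine ⟨by linarith, by linarith, h2⟩
            have hdisj : Disjoint (Ioc (0:ℝ) (u - c)) (Ico (1 - c) 1) := by
              apply Set.disjoint_left.mpr
              rintro v ⟨h1, h2⟩ ⟨h3, h4⟩
              linarith
            rw [hset, measure_union hdisj measurableSet_Ico, Real.volume_Ioc,
              Real.volume_Ico, min_eq_left hu1.le, sub_zero,
              ← ENNReal.ofReal_add (by linarith) (by linarith)]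
            congr 1; ring
        · -- u ≥ 1 : full
          have hset : (fun v : ℝ => Int.fract (v + c)) ⁻¹' Iic u ∩ Ioo 0 1 = Ioo 0 1 := by
            apply inter_eq_self_of_subset_right
            intro v _
            simp only [mem_preimage, mem_Iic]
            exact le_trans (Int.fract_lt_one _).le hu1
          rw [hset, Real.volume_Ioo, min_eq_right hu1, sub_zero]
  -- key: each Seidl map preserves μ
  have hkeyAEM : ∀ k : ℕ, k < N →
      AEMeasurable (fun x => Finv (Int.fract (F x + (k:ℝ) / N))) μ := by
    intro k hk
    have hc0 : (0:ℝ) ≤ (k:ℝ) / N := by positivity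
    have hc1 : (k:ℝ) / N < 1 := by
      rw [div_lt_one hN0]; exact_mod_cast hk
    have h1 : AEMeasurable (fun x => Int.fract (F x + (k:ℝ)/N)) μ :=
      ((hτmeas _).comp hFmeas).aemeasurable
    have h2 : Measure.map (fun x => Int.fract (F x + (k:ℝ)/N)) μ = ν := by
      have := AEMeasurable.map_map_of_aemeasurable
        ((hτmeas ((k:ℝ)/N)).aemeasurable (μ := Measure.map F μ)) hFmeas.aemeasurable
      simp only [Function.comp_def] at this
      rw [← this, hmapF, hfract _ hc0 hc1]
    have h3 : AEMeasurable Finv (Measure.map (fun x => Int.fract (F x + (k:ℝ)/N)) μ) := by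
      rw [h2]; exact hFinvAEM
    exact h3.comp_aemeasurable h1
  have hkey : ∀ k : ℕ, k < N →
      Measure.map (fun x => Finv (Int.fract (F x + (k:ℝ) / N))) μ = μ := by
    intro k hk
    have hc0 : (0:ℝ) ≤ (k:ℝ) / N := by positivity
    have hc1 : (k:ℝ) / N < 1 := by
      rw [div_lt_one hN0]; exact_mod_cast hk
    have h1 : AEMeasurable (fun x => Int.fract (F x + (k:ℝ)/N)) μ :=
      ((hτmeas _).comp hFmeas).aemeasurable
    have h2 : Measure.map (fun x => Int.fract (F x + (k:ℝ)/N)) μ = ν := by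
      have := AEMeasurable.map_map_of_aemeasurable
        ((hτmeas ((k:ℝ)/N)).aemeasurable (μ := Measure.map F μ)) hFmeas.aemeasurable
      simp only [Function.comp_def] at this
      rw [← this, hmapF, hfract _ hc0 hc1]
    have h3 : AEMeasurable Finv (Measure.map (fun x => Int.fract (F x + (k:ℝ)/N)) μ) := by
      rw [h2]; exact hFinvAEM
    have := AEMeasurable.map_map_of_aemeasurable h3 h1
    simp only [Function.comp_def] at this
    rw [h2, hmapFinv] at this
    exact this.symm
  -- assemble
  have hHσ : ∀ σ : Equiv.Perm (Fin N),
      AEMeasurable (fun x (i : Fin N) => Finv (Int.fract (F x + ((σ i : ℕ) : ℝ) / N))) μ := by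
    intro σ
    refine ⟨fun x i => (hkeyAEM (σ i : ℕ) (σ i).isLt).mk _ x,
      measurable_pi_lambda _ (fun i => (hkeyAEM (σ i : ℕ) (σ i).isLt).measurable_mk), ?_⟩
    have hall : ∀ᵐ x ∂μ, ∀ i : Fin N,
        Finv (Int.fract (F x + ((σ i : ℕ) : ℝ) / N)) = (hkeyAEM (σ i : ℕ) (σ i).isLt).mk _ x := by
      rw [MeasureTheory.ae_all_iff]
      intro i
      exact (hkeyAEM (σ i : ℕ) (σ i).isLt).ae_eq_mk
    filter_upwards [hall] with x hx
    funext i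
    exact hx i
  have hterm : ∀ σ : Equiv.Perm (Fin N),
      Measure.map (fun y : Fin N → ℝ => y j)
        (Measure.map (fun x (i : Fin N) => Finv (Int.fract (F x + ((σ i : ℕ) : ℝ) / N))) μ)
      = μ := by
    intro σ
    rw [AEMeasurable.map_map_of_aemeasurable
      ((measurable_pi_apply j).aemeasurable) (hHσ σ)]
    exact hkey (σ j : ℕ) (σ j).isLt
  rw [Measure.map_smul]
  have hsum : Measure.map (fun y : Fin N → ℝ => y j)
      (∑ σ : Equiv.Perm (Fin N),
        Measure.map (fun x (i : Fin N) => Finv (Int.fract (F x + ((σ i : ℕ) : ℝ) / N))) μ)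
      = ∑ σ : Equiv.Perm (Fin N), μ := by
    refine Measure.ext (fun s hs => ?_)
    rw [Measure.map_apply (measurable_pi_apply j) hs,
      Measure.finset_sum_apply, Measure.finset_sum_apply]
    refine Finset.sum_congr rfl (fun σ _ => ?_)
    rw [← Measure.map_apply (measurable_pi_apply j) hs, hterm σ]
  rw [hsum, Finset.sum_const, Finset.card_univ, Fintype.card_perm, Fintype.card_fin]
  rw [← Nat.cast_smul_eq_nsmul ENNReal, smul_smul,
    ENNReal.inv_mul_cancel (by exact_mod_cast Nat.factorial_pos N |>.ne')
      (ENNReal.natCast_ne_top _), one_smul]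
end

section
/- Saturation of the N=3 representability constraint at dissociation: partition (0,1) into Ω_A = (0, 2/3) and Ω_B = (2/3, 1) and let c be the dissociated 3-particle copula with N_A = 2, N_B = 1 given by: c(x,y) = (1/2)·(3/2)·c^A(3x/2, 3y/2) on Ω_A×Ω_A (where c^A is any copula density with uniform marginals on (0,1)²), c = 3/2 on Ω_A×Ω_B and Ω_B×Ω_A, and c = 0 on Ω_B×Ω_B. Then the block probabilities c_{XY} = ∫_{Ω_X×Ω_Y} c satisfy c_{AB} + c_{BA} = 2(c_{AA} + c_{BB}). -/
open MeasureTheory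

lemma scale_marg (g : ℝ → ℝ) (hg : ∫ u in Set.Ioo (0:ℝ) 1, g u = 1) :
    ∫ y in Set.Ioo (0:ℝ) (2/3), g (3*y/2) = 2/3 := by
  have h1 : ∫ y in Set.Ioo (0:ℝ) (2/3), g (3*y/2)
      = ∫ y in (0:ℝ)..(2/3), g ((3/2) * y) := by
    rw [intervalIntegral.integral_of_le (by norm_num), integral_Ioc_eq_integral_Ioo]
    congr 1; ext y; ring_nf
  rw [h1, intervalIntegral.integral_comp_mul_left g (by norm_num : (3/2:ℝ) ≠ 0)]
  norm_num
  rw [intervalIntegral.integral_of_le (by norm_num), integral_Ioc_eq_integral_Ioo, hg]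

/-- **saturation of the N=3 representability constraint at dissociation.**
Partition `(0,1)` into `Ω_A = (0, 2/3)` and `Ω_B = (2/3, 1)` and let `c` be the dissociated
3-particle copula with `N_A = 2`, `N_B = 1`:
`c(x,y) = (1/2)(3/2) c^A(3x/2, 3y/2)` on `Ω_A × Ω_A` (where `c^A` is any copula density with
uniform marginals on `(0,1)²`), `c = 3/2` on `Ω_A × Ω_B` and `Ω_B × Ω_A`, and `c = 0` on
`Ω_B × Ω_B`. Then the block probabilities satisfy `c_{AB} + c_{BA} = 2 (c_{AA} + c_{BB})`. -/
theorem dissociated_three_particle_saturation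
    (cA : ℝ → ℝ → ℝ)
    (hcA_meas : Measurable (Function.uncurry cA))
    (hcA_nonneg : ∀ x y, 0 ≤ cA x y)
    (hcA_marg1 : ∀ x ∈ Set.Ioo (0:ℝ) 1, ∫ y in Set.Ioo (0:ℝ) 1, cA x y = 1)
    (hcA_marg2 : ∀ y ∈ Set.Ioo (0:ℝ) 1, ∫ x in Set.Ioo (0:ℝ) 1, cA x y = 1)
    (c : ℝ → ℝ → ℝ)
    (hc : ∀ x y, c x y =
      if x < 2/3 then
        (if y < 2/3 then (1/2) * (3/2) * cA (3*x/2) (3*y/2) else 3/2)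
      else
        (if y < 2/3 then 3/2 else 0)) :
    (∫ x in Set.Ioo (0:ℝ) (2/3), ∫ y in Set.Ioo (2/3:ℝ) 1, c x y) +
      (∫ x in Set.Ioo (2/3:ℝ) 1, ∫ y in Set.Ioo (0:ℝ) (2/3), c x y)
    = 2 * ((∫ x in Set.Ioo (0:ℝ) (2/3), ∫ y in Set.Ioo (0:ℝ) (2/3), c x y) +
        (∫ x in Set.Ioo (2/3:ℝ) 1, ∫ y in Set.Ioo (2/3:ℝ) 1, c x y)) := by
  have hAB : (∫ x in Set.Ioo (0:ℝ) (2/3), ∫ y in Set.Ioo (2/3:ℝ) 1, c x y) = 1/3 := by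
    rw [setIntegral_congr_fun measurableSet_Ioo
      (g := fun _ => (1/2 : ℝ)) (fun x hx => ?_)]
    · rw [setIntegral_const, Real.volume_real_Ioo]; norm_num
    · simp only
      rw [setIntegral_congr_fun measurableSet_Ioo (g := fun _ => (3/2 : ℝ)) (fun y hy => ?_)]
      · rw [setIntegral_const, Real.volume_real_Ioo]; norm_num
      · rw [hc x y, if_pos hx.2, if_neg (not_lt.2 hy.1.le)]
  have hBA : (∫ x in Set.Ioo (2/3:ℝ) 1, ∫ y in Set.Ioo (0:ℝ) (2/3), c x y) = 1/3 := by
    rw [setIntegral_congr_fun measurableSet_Ioo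
      (g := fun _ => (1 : ℝ)) (fun x hx => ?_)]
    · rw [setIntegral_const, Real.volume_real_Ioo]; norm_num
    · simp only
      rw [setIntegral_congr_fun measurableSet_Ioo (g := fun _ => (3/2 : ℝ)) (fun y hy => ?_)]
      · rw [setIntegral_const, Real.volume_real_Ioo]; norm_num
      · rw [hc x y, if_neg (not_lt.2 hx.1.le), if_pos hy.2]
  have hBB : (∫ x in Set.Ioo (2/3:ℝ) 1, ∫ y in Set.Ioo (2/3:ℝ) 1, c x y) = 0 := by
    rw [setIntegral_congr_fun measurableSet_Ioo
      (g := fun _ => (0 : ℝ)) (fun x hx => ?_)]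
    · simp
    · simp only
      rw [setIntegral_congr_fun measurableSet_Ioo (g := fun _ => (0 : ℝ)) (fun y hy => ?_)]
      · simp
      · rw [hc x y, if_neg (not_lt.2 hx.1.le), if_neg (not_lt.2 hy.1.le)]
  have hAA : (∫ x in Set.Ioo (0:ℝ) (2/3), ∫ y in Set.Ioo (0:ℝ) (2/3), c x y) = 1/3 := by
    rw [setIntegral_congr_fun measurableSet_Ioo
      (g := fun _ => (1/2 : ℝ)) (fun x hx => ?_)]
    · rw [setIntegral_const, Real.volume_real_Ioo]; norm_num
    · simp only
      have hx' : (3*x/2 : ℝ) ∈ Set.Ioo (0:ℝ) 1 := by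
        constructor <;> nlinarith [hx.1, hx.2]
      rw [setIntegral_congr_fun measurableSet_Ioo
        (g := fun y => (3/4 : ℝ) * cA (3*x/2) (3*y/2)) (fun y hy => ?_)]
      · rw [integral_const_mul, scale_marg _ (hcA_marg1 _ hx')]; norm_num
      · rw [hc x y, if_pos hx.2, if_pos hy.2]; ring
  rw [hAB, hBA, hBB, hAA]; norm_num
end
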